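/- Let r, s be natural numbers with r + s ≥ 1. There exists an ℝ-linear map J : Cl(r,s) → Cl(r,s) satisfying (i) J ∘ J = -id, (ii) J(x*y) = x * J(y) for all x, y ∈ Cl(r,s), and (iii) J(map f x) = map f (J x) for every special isometry equivalence f of Q_{r,s}, if and only if either (1) s is odd and r + s ≡ 0 or 3 (mod 4), or (2) s is even and r + s ≡ 1 or 2 (mod 4). -/

import Mathlib

/-!
Since `J (x * y) = x * J y`, the map `J` is right multiplication by `w = J 1`; so `J² = -1` says
`w² = -1`, and equivariance says that `w` is fixed by `SO(r,s)`. Changing the signs of two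
coordinates is a special isometry, acting on the monomial `e_{i₁} ⋯ e_{iₖ}` by `±1`; averaging over
these sign changes shows that a fixed `w` lies in the span of `1` and the volume element `ω`.
Now `ω² = (-1)^(C(r+s, 2) + r)`. If this is `1`, then `(a + b ω)² = (a² + b²) + 2ab ω`, whose scalar
part (read off in the exterior algebra, where `ω` has no scalar part) is never `-1`. If it is `-1`,
right multiplication by `ω` is the required `J`, since an isometry multiplies `ω` by its
determinant.
-/

open CliffordAlgebra

/-- The quadratic form `Q_{r,s}` on `ℝ^{r+s}`:
`Q(x) = -(x_0² + ⋯ + x_{r-1}²) + (x_r² + ⋯ + x_{r+s-1}²)`. -/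
noncomputable def Qrs (r s : ℕ) : QuadraticForm ℝ (Fin (r + s) → ℝ) :=
  QuadraticMap.weightedSumSquares ℝ
    (fun i : Fin (r + s) => if (i : ℕ) < r then (-1 : ℝ) else 1)

/-- The volume element `ω = ι(e_0) * ι(e_1) * ⋯ * ι(e_{r+s-1})` of `Cl(r,s)`. -/
noncomputable def volumeElt (r s : ℕ) : CliffordAlgebra (Qrs r s) :=
  (List.ofFn (fun i : Fin (r + s) => ι (Qrs r s) (Pi.single i 1))).prod

/-- An isometry equivalence of `Q_{r,s}` is special if its determinant is `1`. -/
noncomputable def IsSpecial {r s : ℕ} (f : (Qrs r s).IsometryEquiv (Qrs r s)) : Prop :=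
  LinearEquiv.det f.toLinearEquiv = 1

open Submodule QuadraticMap

section SignEigenvectors

variable {R V ι : Type*} [CommRing R] [Invertible (2 : R)] [AddCommGroup V] [Module R V]
  {v : ι → V} {s : Set ι} {w : V}

theorem mem_span_image_even_of_apply_eq_self {n : ι → ℕ} {φ : V →ₗ[R] V}
    (hφ : ∀ i ∈ s, φ (v i) = (-1 : R) ^ n i • v i) (hw : w ∈ span R (v '' s)) (hφw : φ w = w) :
    w ∈ span R (v '' {i ∈ s | Even (n i)}) := by
  -- `w` is fixed by the projection `(1 + φ) / 2`, which kills the `v i` with `n i` odd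
  let P : V →ₗ[R] V := (⅟2 : R) • (LinearMap.id + φ)
  have hPw : P w = w := by
    simp only [P, LinearMap.smul_apply, LinearMap.add_apply, LinearMap.id_apply, hφw,
      ← two_smul R w, smul_smul, invOf_mul_self, one_smul]
  rw [← hPw]
  have hPspan := mem_map_of_mem (f := P) hw
  rw [map_span, ← Set.image_comp] at hPspan
  refine span_le.mpr ?_ hPspan
  rintro _ ⟨i, hi, rfl⟩
  simp only [Function.comp_apply, P, LinearMap.smul_apply, LinearMap.add_apply,
    LinearMap.id_apply, hφ i hi]
  rcases (n i).even_or_odd with h | h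
  · rw [h.neg_one_pow, one_smul, ← two_smul R (v i), smul_smul, invOf_mul_self, one_smul]
    exact subset_span ⟨i, ⟨hi, h⟩, rfl⟩
  · rw [h.neg_one_pow, neg_one_smul, add_neg_cancel, smul_zero]
    exact zero_mem _

theorem mem_span_image_forall_even_of_apply_eq_self {α : Type*} {T : Finset α}
    {n : α → ι → ℕ} {φ : α → V →ₗ[R] V}
    (hφ : ∀ a ∈ T, ∀ i ∈ s, φ a (v i) = (-1 : R) ^ n a i • v i) (hw : w ∈ span R (v '' s))
    (hφw : ∀ a ∈ T, φ a w = w) :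
    w ∈ span R (v '' {i ∈ s | ∀ a ∈ T, Even (n a i)}) := by
  classical
  induction T using Finset.induction_on with
  | empty => simpa using hw
  | insert a T _ ih =>
    have hT := ih (fun b hb => hφ b (Finset.mem_insert_of_mem hb))
      (fun b hb => hφw b (Finset.mem_insert_of_mem hb))
    have key := mem_span_image_even_of_apply_eq_self
      (fun i hi => hφ a (Finset.mem_insert_self a T) i hi.1) hT
      (hφw a (Finset.mem_insert_self a T))
    convert key using 4
    ext i
    simp only [Finset.forall_mem_insert, Set.mem_ofPred_eq]
    tauto

end SignEigenvectors

section SpanSingleton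

variable {R A ι : Type*} [CommSemiring R] [Semiring A] [Algebra R A]

theorem mul_mem_span_singleton_mul {x y a b : A} (hx : x ∈ R ∙ a) (hy : y ∈ R ∙ b) :
    x * y ∈ R ∙ (a * b) := by
  simpa only [span_mul_span, Set.singleton_mul_singleton] using mul_mem_mul hx hy

theorem prod_map_mem_span_singleton_prod_map {f g : ι → A} :
    ∀ {l : List ι}, (∀ i ∈ l, f i ∈ R ∙ g i) → (l.map f).prod ∈ R ∙ (l.map g).prod
  | [], _ => by simp
  | i :: l, h => by
    simp only [List.map_cons, List.prod_cons]
    exact mul_mem_span_singleton_mul (h i List.mem_cons_self)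
      (prod_map_mem_span_singleton_prod_map fun j hj => h j (List.mem_cons_of_mem i hj))

end SpanSingleton

theorem AlternatingMap.apply_eq_basis_det_smul {R M N ι : Type*} [CommRing R] [AddCommGroup M]
    [Module R M] [AddCommGroup N] [Module R N] [Fintype ι] [DecidableEq ι]
    (g : M [⋀^ι]→ₗ[R] N) (b : Module.Basis ι R M) (v : ι → M) : g v = b.det v • g b := by
  suffices g = b.det.smulRight (g b) from congrArg (· v) this
  refine b.ext_alternating fun i hi => ?_
  let σ : Equiv.Perm ι := Equiv.ofBijective i (Finite.injective_iff_bijective.mp hi)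
  change g (b ∘ σ) = b.det (b ∘ σ) • g b
  rw [g.map_perm, b.det.map_perm, b.det_self, Units.smul_def, Units.smul_def, zsmul_eq_mul,
    mul_one, Int.cast_smul_eq_zsmul]

theorem AlternatingMap.apply_comp_basis {R M N ι : Type*} [CommRing R] [AddCommGroup M]
    [Module R M] [AddCommGroup N] [Module R N] [Fintype ι] [DecidableEq ι]
    (g : M [⋀^ι]→ₗ[R] N) (b : Module.Basis ι R M) (f : M →ₗ[R] M) :
    g (f ∘ b) = LinearMap.det f • g b := by
  rw [g.apply_eq_basis_det_smul b, b.det_comp, b.det_self, mul_one]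

theorem Pi.coe_basisFun (R η : Type*) [Semiring R] [Finite η] [DecidableEq η] :
    ⇑(Pi.basisFun R η) = fun i => Pi.single i 1 :=
  funext (Pi.basisFun_apply R η)

section NegCoords

variable {R ι : Type*} [CommRing R] [Fintype ι] [DecidableEq ι]

def negCoords (S : Finset ι) : (ι → R) →ₗ[R] (ι → R) :=
  Matrix.toLin' (Matrix.diagonal fun k => if k ∈ S then -1 else 1)

theorem negCoords_apply (S : Finset ι) (x : ι → R) (k : ι) :
    negCoords S x k = if k ∈ S then -x k else x k := by
  rw [negCoords, Matrix.toLin'_apply, Matrix.mulVec_diagonal]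
  split_ifs <;> simp

theorem negCoords_single (S : Finset ι) (i : ι) :
    negCoords S (Pi.single i 1 : ι → R) = (if i ∈ S then -1 else 1 : R) • Pi.single i 1 := by
  ext k
  rw [negCoords_apply]
  obtain rfl | hki := eq_or_ne k i <;> split_ifs <;> simp_all

theorem negCoords_negCoords (S : Finset ι) (x : ι → R) :
    negCoords S (negCoords S x) = x := by
  ext k
  simp only [negCoords_apply]
  split_ifs <;> simp

theorem det_negCoords (S : Finset ι) :
    LinearMap.det (negCoords S : (ι → R) →ₗ[R] ι → R) = (-1) ^ S.card := by
  rw [negCoords, LinearMap.det_toLin', Matrix.det_diagonal, Finset.prod_ite_mem]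
  simp

def negCoordsIsometryEquiv (w : ι → R) (S : Finset ι) :
    (weightedSumSquares R w).IsometryEquiv (weightedSumSquares R w) where
  toLinearEquiv := LinearEquiv.ofInvolutive (negCoords S) (negCoords_negCoords S)
  map_app' x := by
    change weightedSumSquares R w (negCoords S x) = _
    simp only [weightedSumSquares_apply, negCoords_apply]
    refine Finset.sum_congr rfl fun k _ => ?_
    split_ifs <;> simp

theorem isOrtho_weightedSumSquares_single (w : ι → R) {i j : ι} (hij : i ≠ j) :
    (weightedSumSquares R w).IsOrtho (Pi.single i 1) (Pi.single j 1) := by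
  simp only [QuadraticMap.IsOrtho, weightedSumSquares_apply, ← Finset.sum_add_distrib]
  refine Finset.sum_congr rfl fun k _ => ?_
  obtain rfl | hki := eq_or_ne k i <;> obtain rfl | hkj := eq_or_ne k j <;> simp_all

end NegCoords

theorem prod_map_ite_mem_pair {R ι : Type*} [CommRing R] [DecidableEq ι] {i j : ι} (hij : i ≠ j)
    (l : List ι) :
    (l.map fun k => if k ∈ ({i, j} : Finset ι) then (-1 : R) else 1).prod =
      (-1) ^ (l.count i + l.count j) := by
  induction l with
  | nil => simp
  | cons a l ih =>
    rw [List.map_cons, List.prod_cons, ih, List.count_cons, List.count_cons]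
    obtain rfl | hai := eq_or_ne a i
    · simp [hij]
      ring
    obtain rfl | haj := eq_or_ne a j
    · simp [hai]
      ring
    · simp [hai, haj]

theorem choose_two_mod_two_eq_one_iff (n : ℕ) : n.choose 2 % 2 = 1 ↔ n % 4 = 2 ∨ n % 4 = 3 := by
  induction n with
  | zero => simp
  | succ n ih =>
    have h : (n + 1).choose 2 = n.choose 2 + n := by
      rw [Nat.choose_succ_succ, Nat.choose_one_right, Nat.add_comm]
    omega

theorem odd_choose_two_add_iff (r s : ℕ) : Odd ((r + s).choose 2 + r) ↔
    ((Odd s ∧ ((r + s) % 4 = 0 ∨ (r + s) % 4 = 3)) ∨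
     (Even s ∧ ((r + s) % 4 = 1 ∨ (r + s) % 4 = 2))) := by
  have h := choose_two_mod_two_eq_one_iff (r + s)
  rw [Nat.odd_iff, Nat.odd_iff, Nat.even_iff]
  omega

namespace CliffordAlgebra

variable {R M I : Type*} [CommRing R] [AddCommGroup M] [Module R M]

theorem ι_pow_eq_smul (Q : QuadraticForm R M) (v : M) (m : ℕ) :
    ι Q v ^ m = Q v ^ (m / 2) • ι Q v ^ (m % 2) := by
  conv_lhs => rw [← Nat.div_add_mod m 2, pow_add, pow_mul, pow_two, ι_sq_scalar, ← map_pow,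
    ← Algebra.smul_def]

variable (Q : QuadraticForm R M) (e : I → M)

def blade (l : List I) : CliffordAlgebra Q :=
  (l.map fun i => ι Q (e i)).prod

@[simp] theorem blade_nil : blade Q e [] = 1 := rfl

@[simp] theorem blade_cons (i : I) (l : List I) :
    blade Q e (i :: l) = ι Q (e i) * blade Q e l := List.prod_cons

theorem blade_append (l₁ l₂ : List I) :
    blade Q e (l₁ ++ l₂) = blade Q e l₁ * blade Q e l₂ := by
  simp [blade]

theorem blade_replicate (m : ℕ) (i : I) : blade Q e (List.replicate m i) = ι Q (e i) ^ m := by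
  simp [blade]

theorem blade_flatMap {κ : Type*} (f : κ → List I) (L : List κ) :
    blade Q e (L.flatMap f) = (L.map fun k => blade Q e (f k)).prod := by
  induction L with
  | nil => rfl
  | cons k L ih => simp [blade_append, ih]

theorem map_blade {M' : Type*} [AddCommGroup M'] [Module R M'] {Q' : QuadraticForm R M'}
    (f : Q →qᵢ Q') (l : List I) :
    CliffordAlgebra.map f (blade Q e l) = blade Q' (f ∘ e) l := by
  simp [blade, map_list_prod, Function.comp_def]

theorem map_blade_of_apply_eq_smul (f : Q →qᵢ Q) (c : I → R) (hf : ∀ i, f (e i) = c i • e i)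
    (l : List I) : CliffordAlgebra.map f (blade Q e l) = (l.map c).prod • blade Q e l := by
  induction l with
  | nil => simp
  | cons i l ih =>
    rw [blade_cons, map_mul, map_apply_ι, ih, hf, map_smul, smul_mul_smul_comm,
      List.map_cons, List.prod_cons]

theorem span_range_blade (he : span R (Set.range e) = ⊤) :
    span R (Set.range (blade Q e)) = ⊤ := by
  refine eq_top_iff'.mpr fun x => ?_
  induction x using CliffordAlgebra.induction with
  | algebraMap c =>
    rw [Algebra.algebraMap_eq_smul_one]
    exact smul_mem _ c (subset_span ⟨[], rfl⟩)
  | ι v =>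
    have hv : ι Q v ∈ (span R (Set.range e)).map (ι Q) := mem_map_of_mem (he ▸ mem_top)
    rw [map_span, ← Set.range_comp] at hv
    refine span_le.mpr ?_ hv
    rintro _ ⟨i, rfl⟩
    exact subset_span ⟨[i], by simp [blade]⟩
  | mul a b ha hb =>
    have hab := mul_mem_mul ha hb
    rw [span_mul_span] at hab
    refine span_mono ?_ hab
    rintro _ ⟨_, ⟨l₁, rfl⟩, _, ⟨l₂, rfl⟩, rfl⟩
    exact ⟨l₁ ++ l₂, blade_append Q e l₁ l₂⟩
  | add a b ha hb => exact add_mem ha hb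

variable {Q e}

theorem blade_mem_span_of_perm (he : Pairwise fun i j => Q.IsOrtho (e i) (e j)) {l₁ l₂ : List I}
    (h : l₁.Perm l₂) : blade Q e l₁ ∈ R ∙ blade Q e l₂ := by
  induction h with
  | nil => exact mem_span_singleton_self _
  | cons i _ ih =>
    simpa using mul_mem_span_singleton_mul (mem_span_singleton_self (ι Q (e i))) ih
  | swap i j l =>
    rw [blade_cons, blade_cons, blade_cons, blade_cons]
    obtain rfl | hij := eq_or_ne i j
    · exact mem_span_singleton_self _
    · rw [ι_mul_ι_mul_of_isOrtho _ (he hij.symm)]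
      exact neg_mem (mem_span_singleton_self _)
  | trans _ _ ih₁ ih₂ => exact mem_span_singleton_trans ih₁ ih₂

theorem blade_mem_span_prod_pow_mod_two {n : ℕ} {e : Fin n → M}
    (he : Pairwise fun i j => Q.IsOrtho (e i) (e j)) (l : List (Fin n)) :
    blade Q e l ∈ R ∙ ((List.finRange n).map fun k => ι Q (e k) ^ (l.count k % 2)).prod := by
  have hperm : l.Perm ((List.finRange n).flatMap fun k => List.replicate (l.count k) k) := by
    refine List.perm_iff_count.mpr fun i => ?_
    simp [List.count_flatMap, Function.comp_def, List.count_replicate, ← Fin.sum_univ_def]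
  refine mem_span_singleton_trans (R := R) (blade_mem_span_of_perm he hperm) ?_
  rw [blade_flatMap]
  refine prod_map_mem_span_singleton_prod_map fun k _ => ?_
  rw [blade_replicate, ι_pow_eq_smul Q _ (l.count k)]
  exact smul_mem _ _ (mem_span_singleton_self _)

theorem blade_mul_ι_of_forall_isOrtho {i : I} :
    ∀ {l : List I}, (∀ j ∈ l, Q.IsOrtho (e j) (e i)) →
      blade Q e l * ι Q (e i) = (-1 : R) ^ l.length • (ι Q (e i) * blade Q e l)
  | [], _ => by simp
  | j :: l, h => by
    rw [blade_cons, mul_assoc, blade_mul_ι_of_forall_isOrtho fun k hk => h k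
        (List.mem_cons_of_mem j hk), mul_smul_comm, ← mul_assoc,
      ι_mul_ι_comm_of_isOrtho (h j List.mem_cons_self), neg_mul, smul_neg, ← neg_smul,
      List.length_cons, pow_succ, mul_neg_one, mul_assoc]

theorem blade_mul_self :
    ∀ {l : List I}, l.Pairwise (fun i j => Q.IsOrtho (e i) (e j)) →
      blade Q e l * blade Q e l =
        algebraMap R _ ((-1) ^ l.length.choose 2 * (l.map fun i => Q (e i)).prod)
  | [], _ => by simp
  | i :: l, h => by
    obtain ⟨hi, hl⟩ := List.pairwise_cons.mp h
    -- move the first factor `e i` of the right-hand copy past the `l.length` factors of `blade l`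
    rw [blade_cons, mul_assoc, ← mul_assoc (blade Q e l),
      blade_mul_ι_of_forall_isOrtho fun j hj => (hi j hj).symm, smul_mul_assoc, mul_smul_comm,
      ← mul_assoc, ← mul_assoc, ι_sq_scalar, mul_assoc, blade_mul_self hl, ← map_mul,
      Algebra.smul_def, ← map_mul, List.length_cons, Nat.choose_succ_succ, Nat.choose_one_right,
      List.map_cons, List.prod_cons]
    congr 1
    ring

theorem contractLeft_blade_eq_zero (d : Module.Dual R M) :
    ∀ {l : List I}, (∀ i ∈ l, d (e i) = 0) → contractLeft (Q := Q) d (blade Q e l) = 0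
  | [], _ => by simp [contractLeft_one]
  | i :: l, h => by
    rw [blade_cons, contractLeft_ι_mul, h i List.mem_cons_self,
      contractLeft_blade_eq_zero d fun j hj => h j (List.mem_cons_of_mem i hj)]
    simp

theorem changeForm_blade {Q' : QuadraticForm R M} {B : LinearMap.BilinForm R M}
    (h : B.toQuadraticMap = Q' - Q) :
    ∀ {l : List I}, l.Pairwise (fun i j => B (e i) (e j) = 0) →
      changeForm h (blade Q e l) = blade Q' e l
  | [], _ => by simp
  | i :: l, hl => by
    obtain ⟨hi, hl⟩ := List.pairwise_cons.mp hl
    rw [blade_cons, changeForm_ι_mul, changeForm_blade h hl,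
      contractLeft_blade_eq_zero (B (e i)) hi, sub_zero, blade_cons]

-- `ExteriorAlgebra R M` is `CliffordAlgebra 0`, so the right-hand side is a wedge product.
theorem equivExterior_blade [Invertible (2 : R)] {l : List I}
    (hl : l.Pairwise fun i j => Q.IsOrtho (e i) (e j)) :
    equivExterior Q (blade Q e l) = blade 0 e l :=
  changeForm_blade changeForm.associated_neg_proof <| hl.imp fun hij => by
    have hsum : Q (e _ + e _) = Q (e _) + Q (e _) := hij
    simp [QuadraticMap.associated_apply, hsum]

theorem ιMulti_eq_blade {n : ℕ} (v : Fin n → M) :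
    ExteriorAlgebra.ιMulti R n v = blade 0 v (List.finRange n) := by
  rw [ExteriorAlgebra.ιMulti_apply, List.ofFn_eq_map]
  rfl

theorem algebraMapInv_equivExterior_blade [Invertible (2 : R)] {l : List I} (hl₀ : l ≠ [])
    (hl : l.Pairwise fun i j => Q.IsOrtho (e i) (e j)) :
    ExteriorAlgebra.algebraMapInv (equivExterior Q (blade Q e l)) = 0 := by
  obtain ⟨i, l, rfl⟩ := List.exists_cons_of_ne_nil hl₀
  rw [equivExterior_blade hl, blade_cons, map_mul]
  simp [ExteriorAlgebra.algebraMapInv]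

theorem map_blade_finRange_eq_det_smul [Invertible (2 : R)] {n : ℕ} (b : Module.Basis (Fin n) R M)
    (hb : Pairwise fun i j => Q.IsOrtho (b i) (b j)) (f : Q.IsometryEquiv Q) :
    map f.toIsometry (blade Q b (List.finRange n)) =
      LinearMap.det (f.toLinearEquiv : M →ₗ[R] M) • blade Q b (List.finRange n) := by
  have horth : ∀ {v : Fin n → M}, (Pairwise fun i j => Q.IsOrtho (v i) (v j)) →
      (List.finRange n).Pairwise fun i j => Q.IsOrtho (v i) (v j) :=
    fun hv => (List.nodup_finRange n).imp fun hij => hv hij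
  have hfb : Pairwise fun i j => Q.IsOrtho ((f.toIsometry ∘ b) i) ((f.toIsometry ∘ b) j) :=
    fun i j hij => by
      change Q (f (b i) + f (b j)) = Q (f (b i)) + Q (f (b j))
      rw [← map_add, f.map_app, f.map_app, f.map_app]
      exact hb hij
  apply (equivExterior Q).injective
  rw [map_blade, map_smul, equivExterior_blade (horth hfb), equivExterior_blade (horth hb),
    ← ιMulti_eq_blade, ← ιMulti_eq_blade]
  exact AlternatingMap.apply_comp_basis _ b _

end CliffordAlgebra

section Qrs

variable {r s : ℕ}

noncomputable def Qrs.negCoords (S : Finset (Fin (r + s))) : (Qrs r s).IsometryEquiv (Qrs r s) :=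
  negCoordsIsometryEquiv _ S

theorem isOrtho_Qrs_single :
    Pairwise fun i j : Fin (r + s) => (Qrs r s).IsOrtho (Pi.single i 1) (Pi.single j 1) :=
  fun _ _ => isOrtho_weightedSumSquares_single _

theorem volumeElt_eq_blade :
    volumeElt r s = blade (Qrs r s) (Pi.single · 1) (List.finRange (r + s)) := by
  rw [volumeElt, List.ofFn_eq_map]
  rfl

theorem volumeElt_mul_self :
    volumeElt r s * volumeElt r s = algebraMap ℝ _ ((-1) ^ ((r + s).choose 2 + r)) := by
  rw [volumeElt_eq_blade,
    blade_mul_self ((List.nodup_finRange _).imp fun h => isOrtho_Qrs_single h),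
    List.length_finRange, pow_add, ← List.ofFn_eq_map, List.prod_ofFn, Fin.prod_univ_add]
  simp [Qrs, weightedSumSquares_apply, Pi.single_apply]

theorem map_volumeElt_of_isSpecial {f : (Qrs r s).IsometryEquiv (Qrs r s)} (hf : IsSpecial f) :
    map f.toIsometry (volumeElt r s) = volumeElt r s := by
  have hdet : LinearMap.det (f.toLinearEquiv : (Fin (r + s) → ℝ) →ₗ[ℝ] _) = 1 := by
    rw [← LinearEquiv.coe_det, hf, Units.val_one]
  have := map_blade_finRange_eq_det_smul (Pi.basisFun ℝ (Fin (r + s)))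
    (Pi.coe_basisFun ℝ (Fin (r + s)) ▸ isOrtho_Qrs_single) f
  rwa [Pi.coe_basisFun, hdet, one_smul, ← volumeElt_eq_blade] at this

theorem isSpecial_negCoords_pair {i j : Fin (r + s)} (hij : i ≠ j) :
    IsSpecial (Qrs.negCoords {i, j}) := by
  refine Units.ext ?_
  rw [LinearEquiv.coe_det, Units.val_one]
  change LinearMap.det (negCoords {i, j} : (Fin (r + s) → ℝ) →ₗ[ℝ] _) = 1
  rw [det_negCoords, Finset.card_pair hij, neg_one_sq]

theorem map_negCoords_pair_blade {i j : Fin (r + s)} (hij : i ≠ j) (l : List (Fin (r + s))) :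
    map (Qrs.negCoords {i, j}).toIsometry (blade (Qrs r s) (Pi.single · 1) l) =
      (-1 : ℝ) ^ (l.count i + l.count j) • blade (Qrs r s) (Pi.single · 1) l := by
  rw [map_blade_of_apply_eq_smul _ _ _ _ fun k => negCoords_single _ k, prod_map_ite_mem_pair hij]

theorem blade_mem_span_one_volumeElt {l : List (Fin (r + s))}
    (hl : ∀ i j, i ≠ j → Even (l.count i + l.count j)) :
    blade (Qrs r s) (Pi.single · 1) l ∈ span ℝ {1, volumeElt r s} := by
  have hmem := blade_mem_span_prod_pow_mod_two isOrtho_Qrs_single l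
  have hparity : (∀ k, l.count k % 2 = 0) ∨ (∀ k, l.count k % 2 = 1) := by
    by_contra! ⟨⟨i, hi⟩, ⟨j, hj⟩⟩
    have := hl i j (by rintro rfl; omega)
    rw [Nat.even_iff] at this
    omega
  rcases hparity with h | h
  · simp only [h, pow_zero, List.map_const', List.prod_replicate, one_pow] at hmem
    exact span_mono (by simp) hmem
  · simp only [h, pow_one] at hmem
    rw [← blade, ← volumeElt_eq_blade] at hmem
    exact span_mono (by simp) hmem

theorem mem_span_one_volumeElt_of_forall_isSpecial {w : CliffordAlgebra (Qrs r s)}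
    (hw : ∀ f, IsSpecial f → map f.toIsometry w = w) : w ∈ span ℝ {1, volumeElt r s} := by
  have hspan : w ∈ span ℝ (blade (Qrs r s) (Pi.single · 1) '' Set.univ) := by
    rw [Set.image_univ,
      span_range_blade _ _ (Pi.coe_basisFun ℝ (Fin (r + s)) ▸ (Pi.basisFun ℝ _).span_eq)]
    trivial
  have hfixed := mem_span_image_forall_even_of_apply_eq_self (T := Finset.univ.offDiag)
    (φ := fun p => (map (Qrs.negCoords {p.1, p.2}).toIsometry).toLinearMap)
    (n := fun p l => l.count p.1 + l.count p.2)
    (fun p hp l _ => map_negCoords_pair_blade (Finset.mem_offDiag.mp hp).2.2 l) hspan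
    (fun p hp => hw _ (isSpecial_negCoords_pair (Finset.mem_offDiag.mp hp).2.2))
  refine span_le.mpr ?_ hfixed
  rintro _ ⟨l, ⟨-, hl⟩, rfl⟩
  exact blade_mem_span_one_volumeElt fun i j hij => hl (i, j) (by simp [hij])

theorem mul_self_ne_neg_one_of_mem_span_one_volumeElt (hrs : 1 ≤ r + s)
    (hω : volumeElt r s * volumeElt r s = 1) {w : CliffordAlgebra (Qrs r s)}
    (hw : w ∈ span ℝ {1, volumeElt r s}) : w * w ≠ -1 := by
  obtain ⟨a, b, rfl⟩ := mem_span_pair.mp hw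
  -- the scalar part, read off in the exterior algebra
  let ψ := ExteriorAlgebra.algebraMapInv.toLinearMap ∘ₗ (equivExterior (Qrs r s)).toLinearMap
  have hψ1 : ψ 1 = 1 := by simp [ψ]
  have hψω : ψ (volumeElt r s) = 0 :=
    volumeElt_eq_blade (r := r) ▸ algebraMapInv_equivExterior_blade
      (List.ne_nil_of_length_pos (by rwa [List.length_finRange]))
      ((List.nodup_finRange _).imp fun h => isOrtho_Qrs_single h)
  intro h
  have hexp : (a • 1 + b • volumeElt r s) * (a • 1 + b • volumeElt r s) =
      (a * a + b * b) • 1 + (2 * a * b) • volumeElt r s := by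
    simp only [add_mul, mul_add, smul_mul_smul_comm, one_mul, mul_one, hω]
    module
  have := congrArg ψ (hexp.symm.trans h)
  simp only [map_add, map_smul, map_neg, hψ1, hψω, smul_eq_mul] at this
  linarith [mul_self_nonneg a, mul_self_nonneg b]

end Qrs

/-- `Cl(r,s)` admits an `SO(r,s)`-equivariant complex structure iff either
`s` is odd and `r+s ≡ 0, 3 (mod 4)`, or `s` is even and `r+s ≡ 1, 2 (mod 4)`. -/
theorem exists_equivariant_complex_structure_iff (r s : ℕ) (hrs : 1 ≤ r + s) :
    (∃ J : CliffordAlgebra (Qrs r s) →ₗ[ℝ] CliffordAlgebra (Qrs r s),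
      (∀ x, J (J x) = -x) ∧
      (∀ x y, J (x * y) = x * J y) ∧
      (∀ f : (Qrs r s).IsometryEquiv (Qrs r s), IsSpecial f →
        ∀ x, J (CliffordAlgebra.map f.toIsometry x) =
          CliffordAlgebra.map f.toIsometry (J x))) ↔
    ((Odd s ∧ ((r + s) % 4 = 0 ∨ (r + s) % 4 = 3)) ∨
     (Even s ∧ ((r + s) % 4 = 1 ∨ (r + s) % 4 = 2))) := by
  rw [← odd_choose_two_add_iff]
  constructor
  · rintro ⟨J, hJJ, hJmul, hJmap⟩
    by_contra hpar
    have hω : volumeElt r s * volumeElt r s = 1 := by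
      rw [volumeElt_mul_self, (Nat.not_odd_iff_even.mp hpar).neg_one_pow, map_one]
    have hJ : ∀ x, J x = x * J 1 := fun x => by simpa using hJmul x 1
    refine mul_self_ne_neg_one_of_mem_span_one_volumeElt hrs hω (w := J 1)
      (mem_span_one_volumeElt_of_forall_isSpecial fun f hf => ?_) ?_
    · simpa using (hJmap f hf 1).symm
    · rw [← hJ, hJJ]
  · intro hpar
    have hω : volumeElt r s * volumeElt r s = -1 := by
      rw [volumeElt_mul_self, hpar.neg_one_pow, map_neg, map_one]
    refine ⟨LinearMap.mulRight ℝ (volumeElt r s), fun x => ?_, fun x y => mul_assoc x y _,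
      fun f hf x => ?_⟩
    · simp [mul_assoc, hω]
    · simp [map_volumeElt_of_isSpecial hf]
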